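/- arXiv:2508.08449 — 2 statements merged into one kernel-verified Lean document; each statement's English description precedes it below -/
import Mathlib

section
/- Let K be a compact subset of ℂ, n ∈ ℕ, and w : K → [0,∞) a bounded function that is nonzero at at least n+1 points of K. Then there exists a monic polynomial T of degree n with complex coefficients such that sup_{z∈K} w(z)|T(z)| ≤ sup_{z∈K} w(z)|P(z)| for every monic polynomial P of degree n; moreover the minimal value sup_{z∈K} w(z)|T(z)| is strictly positive. -/
/-!
Write a monic polynomial of degree `n` as `X ^ n + q` with `q` of degree `< n`, and let the
coefficient vector `c ∈ ℂⁿ` of `q` vary. Since `wnorm K w` is a seminorm on `ℂ[X]`, the map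
`c ↦ wnorm K w (X ^ n + q)` is Lipschitz. It is also coercive: on the `n + 1` points `S` where
`w ≠ 0` it dominates `min_S w` times the sup of `|X ^ n + q|` over `S`, and evaluation on `S` is
injective on polynomials of degree `< n`, hence a closed embedding of `ℂⁿ`. So a minimiser exists.
Its norm is positive because a nonzero polynomial of degree `n` cannot vanish on `n + 1` points.
-/

open Polynomial Metric Set

/-- The weighted sup norm `‖P‖_{E,v} = sup_{z ∈ E} v(z) |P(z)|`. -/
noncomputable def wnorm (E : Set ℂ) (v : ℂ → ℝ) (P : Polynomial ℂ) : ℝ :=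
  sSup ((fun z => v z * ‖P.eval z‖) '' E)

open Filter Topology
open scoped Pointwise

section FiniteDimensionalApproximation

variable {𝕜 E ι : Type*} [NormedField 𝕜] [AddCommGroup E] [Module 𝕜 E] [Fintype ι]

theorem Seminorm.le_sum_mul_norm_pi [DecidableEq ι] (q : Seminorm 𝕜 (ι → 𝕜)) (c : ι → 𝕜) :
    q c ≤ (∑ i, q (Pi.single i 1)) * ‖c‖ :=
  calc q c = q (∑ i, Pi.single i (c i)) := by rw [Finset.univ_sum_single]
    _ ≤ ∑ i, q (Pi.single i (c i)) :=
      Finset.le_sum_of_subadditive q (map_zero q).le (map_add_le_add q) _ _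
    _ = ∑ i, ‖c i‖ * q (Pi.single i 1) := Finset.sum_congr rfl fun i _ => by
      rw [← map_smul_eq_mul, ← Pi.single_smul', smul_eq_mul, mul_one]
    _ ≤ ∑ i, ‖c‖ * q (Pi.single i 1) := by
      gcongr with i
      exact norm_le_pi_norm c i
    _ = (∑ i, q (Pi.single i 1)) * ‖c‖ := by rw [← Finset.mul_sum, mul_comm]

theorem Seminorm.continuous_comp_add (p : Seminorm 𝕜 E) (ℓ : (ι → 𝕜) →ₗ[𝕜] E) (x₀ : E) :
    Continuous fun c => p (x₀ + ℓ c) := by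
  classical
  set C := ∑ i, p.comp ℓ (Pi.single i 1)
  refine (LipschitzWith.of_dist_le_mul (K := ⟨C, by positivity⟩) fun c c' => ?_).continuous
  calc dist (p (x₀ + ℓ c)) (p (x₀ + ℓ c')) ≤ p ((x₀ + ℓ c) - (x₀ + ℓ c')) :=
        abs_sub_map_le_sub p _ _
    _ = p.comp ℓ (c - c') := by simp
    _ ≤ C * dist c c' := by
        rw [dist_eq_norm]
        exact (p.comp ℓ).le_sum_mul_norm_pi _

theorem Seminorm.exists_forall_le_comp_add [ProperSpace 𝕜] (p : Seminorm 𝕜 E)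
    (ℓ : (ι → 𝕜) →ₗ[𝕜] E) (x₀ : E)
    (hlim : Tendsto (fun c => p (x₀ + ℓ c)) (cocompact (ι → 𝕜)) atTop) :
    ∃ c₀, ∀ c, p (x₀ + ℓ c₀) ≤ p (x₀ + ℓ c) :=
  (p.continuous_comp_add ℓ x₀).exists_forall_le hlim

end FiniteDimensionalApproximation

theorem LinearMap.tendsto_norm_add_cocompact {𝕜 V F : Type*} [NontriviallyNormedField 𝕜]
    [CompleteSpace 𝕜] [NormedAddCommGroup V] [NormedSpace 𝕜 V] [FiniteDimensional 𝕜 V]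
    [NormedAddCommGroup F] [NormedSpace 𝕜 F] [ProperSpace F] (g : V →ₗ[𝕜] F)
    (hg : LinearMap.ker g = ⊥) (y : F) :
    Tendsto (fun v => ‖y + g v‖) (cocompact V) atTop :=
  tendsto_norm_cocompact_atTop.comp <| ((Homeomorph.addLeft y).isClosedEmbedding.comp
    (g.isClosedEmbedding_of_injective hg)).tendsto_cocompact

section WeightedNorm

variable {K : Set ℂ} {w : ℂ → ℝ}

theorem wnorm_smul (a : ℂ) (P : ℂ[X]) : wnorm K w (a • P) = ‖a‖ * wnorm K w P := by
  have : (fun z => w z * ‖(a • P).eval z‖) '' K = ‖a‖ • (fun z => w z * ‖P.eval z‖) '' K := by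
    rw [← Set.image_smul, Set.image_image]
    refine Set.image_congr fun z _ => ?_
    simp only [eval_smul, smul_eq_mul, norm_mul]
    ring
  rw [wnorm, this, Real.sSup_smul_of_nonneg (norm_nonneg a), smul_eq_mul, wnorm]

theorem bddAbove_weighted_image (hK : IsCompact K) (hwb : BddAbove (w '' K)) (P : ℂ[X]) :
    BddAbove ((fun z => w z * ‖P.eval z‖) '' K) := by
  obtain ⟨W, hW⟩ := hwb
  obtain ⟨M, hM⟩ := hK.exists_bound_of_continuousOn P.continuous.continuousOn
  refine ⟨max W 0 * M, ?_⟩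
  rintro _ ⟨z, hz, rfl⟩
  calc w z * ‖P.eval z‖ ≤ max W 0 * ‖P.eval z‖ :=
        mul_le_mul_of_nonneg_right ((hW ⟨z, hz, rfl⟩).trans (le_max_left W 0)) (norm_nonneg _)
    _ ≤ max W 0 * M := mul_le_mul_of_nonneg_left (hM z hz) (le_max_right W 0)

theorem le_wnorm (hK : IsCompact K) (hwb : BddAbove (w '' K)) (P : ℂ[X]) {z : ℂ} (hz : z ∈ K) :
    w z * ‖P.eval z‖ ≤ wnorm K w P :=
  le_csSup (bddAbove_weighted_image hK hwb P) ⟨z, hz, rfl⟩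

theorem wnorm_nonneg (hw0 : ∀ z ∈ K, 0 ≤ w z) (P : ℂ[X]) : 0 ≤ wnorm K w P :=
  Real.sSup_nonneg <| by
    rintro _ ⟨z, hz, rfl⟩
    exact mul_nonneg (hw0 z hz) (norm_nonneg _)

theorem wnorm_add_le (hK : IsCompact K) (hw0 : ∀ z ∈ K, 0 ≤ w z) (hwb : BddAbove (w '' K))
    (P Q : ℂ[X]) : wnorm K w (P + Q) ≤ wnorm K w P + wnorm K w Q := by
  refine Real.sSup_le ?_ (add_nonneg (wnorm_nonneg hw0 P) (wnorm_nonneg hw0 Q))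
  rintro _ ⟨z, hz, rfl⟩
  calc w z * ‖(P + Q).eval z‖ ≤ w z * ‖P.eval z‖ + w z * ‖Q.eval z‖ := by
        rw [eval_add, ← mul_add]
        exact mul_le_mul_of_nonneg_left (norm_add_le _ _) (hw0 z hz)
    _ ≤ wnorm K w P + wnorm K w Q := add_le_add (le_wnorm hK hwb P hz) (le_wnorm hK hwb Q hz)

noncomputable def weightedSeminorm (hK : IsCompact K) (hw0 : ∀ z ∈ K, 0 ≤ w z)
    (hwb : BddAbove (w '' K)) : Seminorm ℂ ℂ[X] :=
  Seminorm.of (wnorm K w) (wnorm_add_le hK hw0 hwb) wnorm_smul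

theorem wnorm_pos (hK : IsCompact K) (hw0 : ∀ z ∈ K, 0 ≤ w z) (hwb : BddAbove (w '' K))
    {S : Finset ℂ} (hSK : ↑S ⊆ K) (hSw : ∀ z ∈ S, w z ≠ 0) {P : ℂ[X]} (hP : P ≠ 0)
    (hdeg : P.natDegree < S.card) : 0 < wnorm K w P := by
  obtain ⟨z, hzS, hPz⟩ : ∃ z ∈ S, P.eval z ≠ 0 := by
    by_contra! h
    exact hP (eq_zero_of_natDegree_lt_card_of_eval_eq_zero' P S h hdeg)
  exact (mul_pos ((hw0 z (hSK hzS)).lt_of_ne' (hSw z hzS)) (norm_pos_iff.2 hPz)).trans_le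
    (le_wnorm hK hwb P (hSK hzS))

end WeightedNorm

section MonicParametrization

variable {R : Type*} [Semiring R]

variable (R) in
/-- The polynomial `∑ i < n, c i * X ^ i` with coefficient vector `c`. -/
noncomputable def polyOfCoeffs (n : ℕ) : (Fin n → R) →ₗ[R] R[X] :=
  (degreeLT R n).subtype ∘ₗ (degreeLTEquiv R n).symm.toLinearMap

theorem degree_polyOfCoeffs_lt (n : ℕ) (c : Fin n → R) : (polyOfCoeffs R n c).degree < n :=
  mem_degreeLT.1 ((degreeLTEquiv R n).symm c).2

theorem polyOfCoeffs_injective (n : ℕ) : Function.Injective (polyOfCoeffs R n) :=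
  Subtype.val_injective.comp (degreeLTEquiv R n).symm.injective

theorem monic_X_pow_add_polyOfCoeffs (n : ℕ) (c : Fin n → R) :
    (X ^ n + polyOfCoeffs R n c).Monic :=
  monic_X_pow_add (degree_polyOfCoeffs_lt n c)

theorem natDegree_X_pow_add_polyOfCoeffs [Nontrivial R] (n : ℕ) (c : Fin n → R) :
    (X ^ n + polyOfCoeffs R n c).natDegree = n := by
  rw [natDegree_add_eq_left_of_degree_lt (by rw [degree_X_pow]; exact degree_polyOfCoeffs_lt n c),
    natDegree_X_pow]

end MonicParametrization

theorem exists_eq_X_pow_add_polyOfCoeffs {R : Type*} [Ring R] [Nontrivial R] {n : ℕ} {P : R[X]}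
    (hP : P.Monic) (hPn : P.natDegree = n) : ∃ c, P = X ^ n + polyOfCoeffs R n c := by
  have hPdeg : P.degree = n := by rw [degree_eq_natDegree hP.ne_zero, hPn]
  have hdeg : (P - X ^ n).degree < (n : WithBot ℕ) := by
    rw [← hPdeg]
    exact degree_sub_lt_left (by rw [hPdeg, degree_X_pow]) hP.ne_zero
      (by rw [hP.leadingCoeff, (monic_X_pow n).leadingCoeff])
  refine ⟨degreeLTEquiv R n ⟨P - X ^ n, mem_degreeLT.2 hdeg⟩, ?_⟩
  simp [polyOfCoeffs]

noncomputable def evalOn {R : Type*} [CommSemiring R] (S : Finset R) : R[X] →ₗ[R] (S → R) :=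
  LinearMap.pi fun s => leval (s : R)

theorem ker_evalOn_comp_polyOfCoeffs {R : Type*} [CommRing R] [IsDomain R] {S : Finset R} {n : ℕ}
    (hn : n < S.card) : LinearMap.ker (evalOn S ∘ₗ polyOfCoeffs R n) = ⊥ := by
  refine LinearMap.ker_eq_bot'.2 fun c hc => polyOfCoeffs_injective n ?_
  rw [map_zero]
  refine eq_zero_of_natDegree_lt_card_of_eval_eq_zero' _ S (fun s hs => congr_fun hc ⟨s, hs⟩) ?_
  exact (natDegree_le_of_degree_le (degree_polyOfCoeffs_lt n c).le).trans_lt hn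

theorem tendsto_wnorm_X_pow_add_polyOfCoeffs {K : Set ℂ} {w : ℂ → ℝ} (hK : IsCompact K)
    (hw0 : ∀ z ∈ K, 0 ≤ w z) (hwb : BddAbove (w '' K)) {S : Finset ℂ} (hSK : ↑S ⊆ K)
    (hSw : ∀ z ∈ S, w z ≠ 0) {n : ℕ} (hn : n < S.card) :
    Tendsto (fun c => wnorm K w (X ^ n + polyOfCoeffs ℂ n c)) (cocompact (Fin n → ℂ)) atTop := by
  have hS : S.Nonempty := Finset.card_pos.1 (n.zero_le.trans_lt hn)
  set m := S.inf' hS w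
  have hm : 0 < m := (Finset.lt_inf'_iff hS).2 fun z hz => (hw0 z (hSK hz)).lt_of_ne' (hSw z hz)
  refine tendsto_atTop_mono (fun c => ?_) ((LinearMap.tendsto_norm_add_cocompact _
    (ker_evalOn_comp_polyOfCoeffs hn) (evalOn S (X ^ n))).const_mul_atTop hm)
  rw [LinearMap.comp_apply, ← map_add, ← le_div_iff₀' hm,
    pi_norm_le_iff_of_nonneg (div_nonneg (wnorm_nonneg hw0 _) hm.le)]
  rintro ⟨s, hs⟩
  rw [le_div_iff₀' hm]
  exact (mul_le_mul_of_nonneg_right (Finset.inf'_le w hs) (norm_nonneg _)).trans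
    (le_wnorm hK hwb _ (hSK hs))

theorem stmt2 (K : Set ℂ) (hK : IsCompact K) (n : ℕ) (w : ℂ → ℝ)
    (hw0 : ∀ z ∈ K, 0 ≤ w z) (hwb : BddAbove (w '' K))
    (hsupp : ∃ S : Finset ℂ, ↑S ⊆ K ∧ n + 1 ≤ S.card ∧ ∀ z ∈ S, w z ≠ 0) :
    ∃ T : Polynomial ℂ, T.Monic ∧ T.natDegree = n ∧
      (∀ P : Polynomial ℂ, P.Monic → P.natDegree = n → wnorm K w T ≤ wnorm K w P) ∧
      0 < wnorm K w T := by
  obtain ⟨S, hSK, hn, hSw⟩ := hsupp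
  obtain ⟨c₀, hc₀⟩ := (weightedSeminorm hK hw0 hwb).exists_forall_le_comp_add
    (polyOfCoeffs ℂ n) (X ^ n) (tendsto_wnorm_X_pow_add_polyOfCoeffs hK hw0 hwb hSK hSw hn)
  have hdeg := natDegree_X_pow_add_polyOfCoeffs n c₀
  refine ⟨_, monic_X_pow_add_polyOfCoeffs n c₀, hdeg, fun P hP hPn => ?_,
    wnorm_pos hK hw0 hwb hSK hSw (monic_X_pow_add_polyOfCoeffs n c₀).ne_zero (by omega)⟩
  obtain ⟨c, rfl⟩ := exists_eq_X_pow_add_polyOfCoeffs hP hPn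
  exact hc₀ c
end

section
/- Let p be a polynomial over ℂ of degree m ≥ 1 and let q be a polynomial over ℂ of degree at most nm − 1, where n ≥ 1. For each ζ ∈ ℂ, let z₁(ζ), …, z_m(ζ) denote the m roots of the polynomial p(z) − ζ counted with multiplicity, and set S(ζ) = q(z₁(ζ)) + ⋯ + q(z_m(ζ)). Then S coincides with a polynomial in ζ of degree at most n − 1. -/
/-!
By Vieta, the elementary symmetric functions `eᵢ(ζ)` of the roots of `p - ζ` are constant for
`i < m`, affine in `ζ` for `i = m` and zero for `i > m`; so `eᵢ` is a polynomial in `ζ` of degree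
at most `i / m`. Newton's identities express the power sum `pₖ` through the products `eₐ p_b` with
`a + b = k`, and `a / m + b / m ≤ k / m`, so by induction `pₖ` is a polynomial of degree at most
`k / m`. Hence `S = ∑ qₖ pₖ` has degree at most `deg q / m ≤ n - 1`.
-/

open Polynomial

theorem Multiset.sum_map_pow_eq_mul_esymm_sub_sum {R : Type*} [CommRing R] (s : Multiset R)
    (k : ℕ) (hk : 0 < k) :
    (s.map (· ^ k)).sum = (-1) ^ (k + 1) * k * s.esymm k -
      ∑ a ∈ Finset.HasAntidiagonal.antidiagonal k with a.1 ∈ Set.Ioo 0 k,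
        (-1) ^ a.1 * s.esymm a.1 * (s.map (· ^ a.2)).sum := by
  classical
  have hX : (Finset.univ : Finset s).val.map (fun x : s ↦ (x : R)) = s := s.map_univ_coe
  have hpsum (j : ℕ) : MvPolynomial.aeval (fun x : s ↦ (x : R)) (MvPolynomial.psum s R j) =
      (s.map (· ^ j)).sum := by
    simp only [MvPolynomial.psum, map_sum, map_pow, MvPolynomial.aeval_X]
    conv_rhs => rw [← hX, Multiset.map_map]
    rfl
  have hesymm (j : ℕ) : MvPolynomial.aeval (fun x : s ↦ (x : R)) (MvPolynomial.esymm s R j) =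
      s.esymm j := by
    rw [MvPolynomial.aeval_esymm_eq_multiset_esymm, hX]
  have h := congrArg (MvPolynomial.aeval (fun x : s ↦ (x : R)))
    (MvPolynomial.psum_eq_mul_esymm_sub_sum s R k hk)
  simpa only [map_sub, map_mul, map_sum, map_pow, map_neg, map_one, map_natCast, hpsum,
    hesymm] using h

def IsPolyOfDegreeLE {R : Type*} [CommRing R] (f : R → R) (d : ℕ) : Prop :=
  ∃ P : R[X], P.natDegree ≤ d ∧ ∀ x, P.eval x = f x

namespace IsPolyOfDegreeLE

variable {R : Type*} [CommRing R] {f g : R → R} {d e : ℕ}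

theorem const (c : R) : IsPolyOfDegreeLE (fun _ ↦ c) d :=
  ⟨C c, (natDegree_C c).trans_le (Nat.zero_le d), fun _ ↦ eval_C⟩

theorem congr (hf : IsPolyOfDegreeLE f d) (hfg : ∀ x, f x = g x) : IsPolyOfDegreeLE g d :=
  let ⟨P, hP, hPf⟩ := hf
  ⟨P, hP, fun x ↦ (hPf x).trans (hfg x)⟩

theorem id : IsPolyOfDegreeLE (fun x : R ↦ x) 1 :=
  ⟨X, natDegree_X_le, fun _ ↦ eval_X⟩

theorem mono (hf : IsPolyOfDegreeLE f d) (hde : d ≤ e) : IsPolyOfDegreeLE f e :=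
  let ⟨P, hP, hPf⟩ := hf
  ⟨P, hP.trans hde, hPf⟩

theorem add (hf : IsPolyOfDegreeLE f d) (hg : IsPolyOfDegreeLE g d) :
    IsPolyOfDegreeLE (fun x ↦ f x + g x) d :=
  let ⟨P, hP, hPf⟩ := hf
  let ⟨Q, hQ, hQg⟩ := hg
  ⟨P + Q, (natDegree_add_le P Q).trans (max_le hP hQ), fun x ↦ by rw [eval_add, hPf, hQg]⟩

theorem sub (hf : IsPolyOfDegreeLE f d) (hg : IsPolyOfDegreeLE g d) :
    IsPolyOfDegreeLE (fun x ↦ f x - g x) d :=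
  let ⟨P, hP, hPf⟩ := hf
  let ⟨Q, hQ, hQg⟩ := hg
  ⟨P - Q, (natDegree_sub_le P Q).trans (max_le hP hQ), fun x ↦ by rw [eval_sub, hPf, hQg]⟩

theorem mul (hf : IsPolyOfDegreeLE f d) (hg : IsPolyOfDegreeLE g e) :
    IsPolyOfDegreeLE (fun x ↦ f x * g x) (d + e) :=
  let ⟨P, hP, hPf⟩ := hf
  let ⟨Q, hQ, hQg⟩ := hg
  ⟨P * Q, natDegree_mul_le_of_le hP hQ, fun x ↦ by rw [eval_mul, hPf, hQg]⟩

theorem const_mul (c : R) (hf : IsPolyOfDegreeLE f d) : IsPolyOfDegreeLE (fun x ↦ c * f x) d := by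
  simpa using (const (d := 0) c).mul hf

theorem sum {ι : Type*} (s : Finset ι) {f : ι → R → R}
    (hf : ∀ i ∈ s, IsPolyOfDegreeLE (f i) d) : IsPolyOfDegreeLE (fun x ↦ ∑ i ∈ s, f i x) d := by
  classical
  induction s using Finset.induction_on with
  | empty => exact (const 0).congr fun x ↦ Finset.sum_empty.symm
  | insert i s hi ih =>
    rw [Finset.forall_mem_insert] at hf
    simpa only [Finset.sum_insert hi] using hf.1.add (ih hf.2)

end IsPolyOfDegreeLE

theorem isPolyOfDegreeLE_sum_map_pow {R : Type*} [CommRing R] (s : R → Multiset R) (m c : ℕ)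
    (hcard : ∀ x, Multiset.card (s x) = c)
    (hesymm : ∀ i, IsPolyOfDegreeLE (fun x ↦ (s x).esymm i) (i / m)) (k : ℕ) :
    IsPolyOfDegreeLE (fun x ↦ ((s x).map (· ^ k)).sum) (k / m) := by
  induction k using Nat.strong_induction_on with
  | _ k ih =>
  rcases Nat.eq_zero_or_pos k with rfl | hk
  · simpa [hcard] using IsPolyOfDegreeLE.const (c : R)
  refine (((hesymm k).const_mul _).sub (IsPolyOfDegreeLE.sum _ fun a ha ↦ ?_)).congr
    fun x ↦ ((s x).sum_map_pow_eq_mul_esymm_sub_sum k hk).symm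
  rw [Finset.mem_filter, Finset.HasAntidiagonal.mem_antidiagonal, Set.mem_Ioo] at ha
  refine (((hesymm a.1).const_mul _).mul (ih a.2 (by omega))).mono ?_
  rw [← ha.1]
  exact Nat.div_add_div_le_add_div

theorem isPolyOfDegreeLE_sum_map_eval {R : Type*} [CommRing R] (s : R → Multiset R) (m : ℕ)
    (hpow : ∀ k, IsPolyOfDegreeLE (fun x ↦ ((s x).map (· ^ k)).sum) (k / m)) (q : R[X]) :
    IsPolyOfDegreeLE (fun x ↦ ((s x).map q.eval).sum) (q.natDegree / m) := by
  refine (IsPolyOfDegreeLE.sum q.support fun k hk ↦ ((hpow k).const_mul (q.coeff k)).mono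
    (Nat.div_le_div_right (le_natDegree_of_mem_supp k hk))).congr fun x ↦ ?_
  simp_rw [eval_eq_sum, Polynomial.sum_def, ← Multiset.sum_map_mul_left]
  exact Multiset.sum_map_sum_map _ _

theorem isPolyOfDegreeLE_esymm_roots_sub_C {K : Type*} [Field K] [IsAlgClosed K] (p : K[X])
    (hp : 0 < p.natDegree) (i : ℕ) :
    IsPolyOfDegreeLE (fun x ↦ (p - C x).roots.esymm i) (i / p.natDegree) := by
  set m := p.natDegree
  have hdeg (x : K) : (p - C x).natDegree = m := natDegree_sub_C
  rcases lt_or_ge m i with hmi | him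
  · refine (IsPolyOfDegreeLE.const 0).congr fun x ↦ ?_
    rw [Multiset.esymm, Multiset.powersetCard_eq_empty, Multiset.map_zero, Multiset.sum_zero]
    rwa [IsAlgClosed.card_roots_eq_natDegree, hdeg]
  have hcoeff : IsPolyOfDegreeLE (fun x ↦ (p - C x).coeff (m - i)) (i / m) := by
    rcases him.eq_or_lt with rfl | hlt
    · rw [Nat.div_self hp, Nat.sub_self]
      exact ((IsPolyOfDegreeLE.const _).sub IsPolyOfDegreeLE.id).congr fun x ↦ by
        rw [coeff_sub, coeff_C_zero]
    · refine (IsPolyOfDegreeLE.const (p.coeff (m - i))).congr fun x ↦ ?_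
      rw [coeff_sub, coeff_C, if_neg (by omega), sub_zero]
  have hlc : p.leadingCoeff ≠ 0 := leadingCoeff_ne_zero.2 (ne_zero_of_natDegree_gt hp)
  refine (hcoeff.const_mul ((-1) ^ i / p.leadingCoeff)).congr fun x ↦ ?_
  have hvieta := coeff_eq_esymm_roots_of_card IsAlgClosed.card_roots_eq_natDegree
    (show m - i ≤ (p - C x).natDegree by rw [hdeg]; omega)
  have hlc_sub : (p - C x).leadingCoeff = p.leadingCoeff := by
    rw [leadingCoeff, hdeg, coeff_sub, coeff_C, if_neg hp.ne', sub_zero]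
    rfl
  rw [hvieta, hdeg, Nat.sub_sub_self him, hlc_sub]
  field_simp
  rw [← pow_mul, pow_mul', neg_one_sq, one_pow, one_mul]

theorem stmt13_general (p q : Polynomial ℂ) (m n : ℕ) (hm : 1 ≤ m)
    (hpdeg : p.natDegree = m) (hqdeg : q.degree ≤ (n * m - 1 : ℕ)) :
    ∃ S : Polynomial ℂ, S.degree ≤ (n - 1 : ℕ) ∧
      ∀ ζ : ℂ, S.eval ζ = (((p - Polynomial.C ζ).roots).map (fun z => q.eval z)).sum := by
  subst hpdeg
  have hpow := isPolyOfDegreeLE_sum_map_pow (fun ζ ↦ (p - C ζ).roots) _ p.natDegree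
    (fun ζ ↦ by rw [IsAlgClosed.card_roots_eq_natDegree, natDegree_sub_C])
    (isPolyOfDegreeLE_esymm_roots_sub_C p hm)
  obtain ⟨S, hS, hSeval⟩ := isPolyOfDegreeLE_sum_map_eval _ _ hpow q
  refine ⟨S, degree_le_of_natDegree_le (hS.trans ?_), hSeval⟩
  have hq := natDegree_le_iff_degree_le.2 hqdeg
  rw [Nat.div_le_iff_le_mul_add_pred hm, Nat.mul_sub_one, mul_comm]
  omega

/-- Sums of values of `q` over the roots (with multiplicity) of `p(z) - ζ` define a polynomial
in `ζ` of degree at most `n - 1` whenever `deg q ≤ nm - 1`. -/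
theorem stmt13 (p q : Polynomial ℂ) (m n : ℕ) (hm : 1 ≤ m) (hn : 1 ≤ n)
    (hpdeg : p.natDegree = m) (hqdeg : q.degree ≤ (n * m - 1 : ℕ)) :
    ∃ S : Polynomial ℂ, S.degree ≤ (n - 1 : ℕ) ∧
      ∀ ζ : ℂ, S.eval ζ = (((p - Polynomial.C ζ).roots).map (fun z => q.eval z)).sum :=
  stmt13_general p q m n hm hpdeg hqdeg
end
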